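/- Let A be a small preadditive category, let (C,T,F) be a TTF triple in Mod A, and let c : Mod A → Mod A be the torsion radical of the torsion pair (C,T). Then: (1) the ideal c(A) of A defined by c(A)(a,b) := c(H_b)(a) coincides with the ideal I_T given by I_T(a,b) := {r ∈ A(a,b) : T(r) = 0 for all T ∈ T}; (2) the ideal I_T is idempotent. -/

import Mathlib

open CategoryTheory CategoryTheory.Limits Opposite
noncomputable section
universe u
variable (A : Type u) [SmallCategory A] [Preadditive A]

abbrev PMod := Aᵒᵖ ⥤ AddCommGrpCat.{u}

def Hrep (b : A) : PMod A where
  obj a := AddCommGrpCat.of (unop a ⟶ b)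
  map f := AddCommGrpCat.ofHom (AddMonoidHom.mk' (fun g => f.unop ≫ g)
    (fun g h => Preadditive.comp_add _ _ _ _ _ _))
  map_id a := by ext g; simp
  map_comp f g := by
    ext h
    show (f ≫ g).unop ≫ h = g.unop ≫ f.unop ≫ h
    simp

def toH {a b : A} (γ : a ⟶ b) : ((Hrep A b).obj (op a)) := γ

def Hmap {b b' : A} (r : b ⟶ b') : Hrep A b ⟶ Hrep A b' where
  app a := AddCommGrpCat.ofHom (AddMonoidHom.mk' (fun g => g ≫ r)
    (fun g h => Preadditive.add_comp _ _ _ _ _ _))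
  naturality a a' f := by
    ext g
    show (f.unop ≫ g) ≫ r = f.unop ≫ g ≫ r
    exact Category.assoc _ _ _

def inSub {M : PMod A} (R : Subobject M) {a : A} (x : M.obj (op a)) : Prop :=
  ∃ y, R.arrow.app (op a) y = x


/-- A two-sided ideal of the preadditive category `A`. -/
structure CatIdeal : Type u where
  carrier : ∀ a b : A, AddSubgroup (a ⟶ b)
  comp_mem_left : ∀ {a b c : A} (f : a ⟶ b) (g : b ⟶ c), f ∈ carrier a b → f ≫ g ∈ carrier a c
  comp_mem_right : ∀ {a b c : A} (f : a ⟶ b) (g : b ⟶ c), g ∈ carrier b c → f ≫ g ∈ carrier a c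

/-- The product of two ideals: finite sums of composites. -/
def idealMul (I J : CatIdeal A) : ∀ a b : A, AddSubgroup (a ⟶ b) := fun a b =>
  AddSubgroup.closure
    {u | ∃ (c : A) (ψ : a ⟶ c) (φ : c ⟶ b), ψ ∈ J.carrier a c ∧ φ ∈ I.carrier c b ∧ u = ψ ≫ φ}

def CatIdeal.IsIdempotent (I : CatIdeal A) : Prop :=
  ∀ a b : A, idealMul A I I a b = I.carrier a b

def IsTorsionPair (T F : Set (PMod A)) : Prop :=
  T = {X | X.Additive ∧ ∀ Y ∈ F, ∀ f : X ⟶ Y, f = 0} ∧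
  F = {X | X.Additive ∧ ∀ Y ∈ T, ∀ f : Y ⟶ X, f = 0} ∧
  ∀ X : PMod A, X.Additive →
    ∃ (Z : PMod A) (p : X ⟶ Z), Z ∈ F ∧ Epi p ∧ kernel p ∈ T

/-- A TTF triple: both `(C, T)` and `(T, F)` are torsion pairs. -/
def IsTTFTriple (C T F : Set (PMod A)) : Prop :=
  IsTorsionPair A C T ∧ IsTorsionPair A T F

/-- `t` is the torsion radical of `M` with respect to the torsion class `Tc`:
the largest subobject of `M` belonging to `Tc`. -/
def IsTorsionRadicalSub (Tc : Set (PMod A)) (M : PMod A) (t : Subobject M) : Prop :=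
  ((t : PMod A) ∈ Tc) ∧ ∀ s : Subobject M, ((s : PMod A) ∈ Tc) → s ≤ t

/-! By Yoneda, `r ∈ c(H_b)(a)` says that `H_a → H_b, g ↦ g ≫ r` factors through `c(H_b)`. As
`c(H_b) ∈ C`, every `T`-module kills such an `r`; conversely, if `r` is killed by `T`, it is killed
by the `T`-quotient `Z` in the approximation `0 → K → H_b → Z → 0` with `K ∈ C`, so `r` lies in
`K ≤ c(H_b)`.

For idempotence, a module `M` annihilated by `I_T` lies in `T`: for a map `f : M → Y` with `Y ∈ F`
and `x ∈ M(a)`, the composite `H_a → M → Y` kills `I_T(-,a) ⊇ K`, so it factors through `Z ∈ T`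
and vanishes. In particular `I_T(-,b)/I_T²(-,b) ∈ T`, and this module is a quotient of
`c(H_b) = I_T(-,b) ∈ C`, hence zero. -/

section

variable {A}

instance Hrep_additive (b : A) : (Hrep A b).Additive where
  map_add {_ _ f g} := by
    ext h
    exact Preadditive.add_comp _ _ _ f.unop g.unop h

def yonedaHom (M : PMod A) [M.Additive] {b : A} (x : M.obj (op b)) : Hrep A b ⟶ M where
  app a := AddCommGrpCat.ofHom (AddMonoidHom.mk' (fun g => M.map g.op x) (fun g h => by
    show M.map (g + h).op x = M.map g.op x + M.map h.op x
    rw [op_add, M.map_add]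
    rfl))
  naturality a a' f := by
    ext g
    show M.map ((g : unop a ⟶ b).op ≫ f) x = M.map f (M.map g.op x)
    rw [M.map_comp]
    rfl

lemma app_toH_comp {M : PMod A} {a a' b : A} (p : Hrep A b ⟶ M) (g : a' ⟶ a) (r : a ⟶ b) :
    p.app (op a') (toH A (g ≫ r)) = M.map g.op (p.app (op a) (toH A r)) := by
  change ((Hrep A b).map g.op ≫ p.app (op a')) (toH A r) = (p.app (op a) ≫ M.map g.op) (toH A r)
  rw [p.naturality]

lemma Hmap_comp_eq_zero {M : PMod A} {a b : A} (r : a ⟶ b) (p : Hrep A b ⟶ M)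
    (hr : p.app (op a) (toH A r) = 0) : Hmap A r ≫ p = 0 := by
  ext a' g
  exact (app_toH_comp p (g : unop a' ⟶ a) r).trans (by rw [hr, map_zero]; rfl)

lemma inSub_of_factors {a b : A} (t : Subobject (Hrep A b)) (r : a ⟶ b)
    (hr : t.Factors (Hmap A r)) : inSub A t (toH A r) := by
  refine ⟨(t.factorThru _ hr).app (op a) (toH A (𝟙 a)), ?_⟩
  rw [← ConcreteCategory.comp_apply, ← NatTrans.comp_app, t.factorThru_arrow]
  exact Category.id_comp r

namespace IsTorsionPair

variable {T F : Set (PMod A)}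

lemma mem_left_iff (h : IsTorsionPair A T F) {X : PMod A} :
    X ∈ T ↔ X.Additive ∧ ∀ Y ∈ F, ∀ f : X ⟶ Y, f = 0 := by
  rw [h.1]
  rfl

lemma mem_right_iff (h : IsTorsionPair A T F) {Y : PMod A} :
    Y ∈ F ↔ Y.Additive ∧ ∀ X ∈ T, ∀ f : X ⟶ Y, f = 0 := by
  rw [h.2.1]
  rfl

lemma additive_of_mem_left (h : IsTorsionPair A T F) {X : PMod A} (hX : X ∈ T) : X.Additive :=
  (h.mem_left_iff.1 hX).1

lemma additive_of_mem_right (h : IsTorsionPair A T F) {Y : PMod A} (hY : Y ∈ F) : Y.Additive :=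
  (h.mem_right_iff.1 hY).1

lemma hom_eq_zero (h : IsTorsionPair A T F) {X Y : PMod A} (hX : X ∈ T) (hY : Y ∈ F)
    (f : X ⟶ Y) : f = 0 :=
  (h.mem_left_iff.1 hX).2 Y hY f

lemma mem_left_of_hom_eq_zero (h : IsTorsionPair A T F) {X : PMod A} [X.Additive]
    (hX : ∀ Y ∈ F, ∀ f : X ⟶ Y, f = 0) : X ∈ T :=
  h.mem_left_iff.2 ⟨inferInstance, hX⟩

lemma mem_left_of_iso (h : IsTorsionPair A T F) {X Y : PMod A} (e : X ≅ Y) (hX : X ∈ T) :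
    Y ∈ T := by
  have := h.additive_of_mem_left hX
  have := Functor.additive_of_iso e
  refine h.mem_left_of_hom_eq_zero fun Z hZ f => ?_
  rw [← e.inv_hom_id_assoc f, h.hom_eq_zero hX hZ (e.hom ≫ f), comp_zero]

lemma eq_zero_of_kernel_comp (h : IsTorsionPair A T F) {X Y Z : PMod A} (p : X ⟶ Z) [Epi p]
    (hZ : Z ∈ T) (hY : Y ∈ F) (f : X ⟶ Y) (hf : kernel.ι p ≫ f = 0) : f = 0 := by
  rw [← Abelian.comp_epiDesc p f hf, h.hom_eq_zero hZ hY (Abelian.epiDesc p f hf), comp_zero]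

end IsTorsionPair

section TTF

variable {C T F : Set (PMod A)}

lemma map_eq_zero_of_mem_range (hCT : IsTorsionPair A C T) {K : PMod A} (hK : K ∈ C)
    {a b : A} (ι : K ⟶ Hrep A b) (y : K.obj (op a)) {M : PMod A} (hM : M ∈ T) :
    M.map (ι.app (op a) y).op = 0 := by
  have := hCT.additive_of_mem_right hM
  ext x
  have h0 : ι ≫ yonedaHom M x = 0 := hCT.hom_eq_zero hK hM _
  change (ι ≫ yonedaHom M x).app (op a) y = 0
  rw [h0]
  rfl

lemma map_eq_zero_of_inSub_radical (hCT : IsTorsionPair A C T) {a b : A}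
    {t : Subobject (Hrep A b)} (ht : IsTorsionRadicalSub A C (Hrep A b) t) {r : a ⟶ b}
    (hr : inSub A t (toH A r)) : ∀ M ∈ T, M.map r.op = 0 := by
  obtain ⟨y, hy⟩ := hr
  intro M hM
  have := map_eq_zero_of_mem_range hCT ht.1 t.arrow y hM
  rwa [hy] at this

lemma inSub_radical_of_app_eq_zero (hCT : IsTorsionPair A C T) {a b : A}
    {t : Subobject (Hrep A b)} (ht : IsTorsionRadicalSub A C (Hrep A b) t) {r : a ⟶ b}
    {Z : PMod A} (p : Hrep A b ⟶ Z) (hp : kernel p ∈ C) (hr : p.app (op a) (toH A r) = 0) :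
    inSub A t (toH A r) :=
  inSub_of_factors t r <| Subobject.factors_of_le _
    (ht.2 _ (hCT.mem_left_of_iso (kernelSubobjectIso p).symm hp))
    (kernelSubobject_factors p _ (Hmap_comp_eq_zero r p hr))

lemma inSub_radical_iff (hCT : IsTorsionPair A C T) {a b : A}
    {t : Subobject (Hrep A b)} (ht : IsTorsionRadicalSub A C (Hrep A b) t) (r : a ⟶ b) :
    inSub A t (toH A r) ↔ ∀ M ∈ T, M.map r.op = 0 := by
  refine ⟨map_eq_zero_of_inSub_radical hCT ht, fun hr => ?_⟩
  obtain ⟨Z, p, hZ, -, hp⟩ := hCT.2.2 (Hrep A b) inferInstance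
  refine inSub_radical_of_app_eq_zero hCT ht p hp ?_
  rw [← Category.comp_id r, app_toH_comp, hr Z hZ]
  rfl

/-- `h` vanishes on the kernel of the approximation `H_a ↠ Z` of `H_a` by `Z ∈ T`, because that
kernel lies in `C` and hence is annihilated by `T`; so `h` factors through `Z` and is zero. -/
lemma hom_Hrep_eq_zero_of_annihilated (hCT : IsTorsionPair A C T) (hTF : IsTorsionPair A T F)
    {a : A} {Y : PMod A} (hY : Y ∈ F) (h : Hrep A a ⟶ Y)
    (hh : ∀ (a' : A) (s : a' ⟶ a), (∀ M ∈ T, M.map s.op = 0) → h.app (op a') (toH A s) = 0) :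
    h = 0 := by
  obtain ⟨Z, p, hZ, _, hp⟩ := hCT.2.2 (Hrep A a) inferInstance
  refine hTF.eq_zero_of_kernel_comp p hZ hY h ?_
  ext a' x
  exact hh _ _ fun M hM => map_eq_zero_of_mem_range hCT hp (kernel.ι p) x hM

lemma mem_of_annihilated (hCT : IsTorsionPair A C T) (hTF : IsTorsionPair A T F)
    {M : PMod A} [M.Additive]
    (hM : ∀ (a b : A) (r : a ⟶ b), (∀ N ∈ T, N.map r.op = 0) → M.map r.op = 0) : M ∈ T := by
  refine hTF.mem_left_of_hom_eq_zero fun Y hY f => ?_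
  ext a x
  have h0 : yonedaHom M x ≫ f = 0 := hom_Hrep_eq_zero_of_annihilated hCT hTF hY _
    fun a' s hs => by
      change f.app _ (M.map s.op x) = 0
      rw [hM _ _ s hs]
      exact map_zero _
  have h1 := congrArg (fun g => g.app a (toH A (𝟙 (unop a)))) h0
  change f.app a (M.map (𝟙 (unop a)).op x) = 0 at h1
  simpa using h1

end TTF

def annihilatorIdeal (T : Set (PMod A)) (hT : ∀ M ∈ T, M.Additive) : CatIdeal A where
  carrier a b :=
    { carrier := {r | ∀ M ∈ T, M.map r.op = 0}
      zero_mem' M hM := by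
        have := hT M hM
        rw [op_zero, Functor.map_zero]
      add_mem' {r s} hr hs M hM := by
        have := hT M hM
        rw [op_add, Functor.map_add, hr M hM, hs M hM, add_zero]
      neg_mem' {r} hr M hM := by
        have := hT M hM
        rw [op_neg, Functor.map_neg, hr M hM, neg_zero] }
  comp_mem_left f g hf M hM := by
    rw [op_comp, Functor.map_comp, hf M hM, comp_zero]
  comp_mem_right f g hg M hM := by
    rw [op_comp, Functor.map_comp, hg M hM, zero_comp]

namespace CatIdeal

variable (I : CatIdeal A)

lemma idealMul_le (a b : A) : idealMul A I I a b ≤ I.carrier a b := by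
  refine (AddSubgroup.closure_le _).mpr ?_
  rintro u ⟨c, ψ, φ, hψ, -, rfl⟩
  exact I.comp_mem_left ψ φ hψ

lemma comp_mem_idealMul {a a' b : A} (g : a' ⟶ a) {ψ : a ⟶ b}
    (hψ : ψ ∈ idealMul A I I a b) : g ≫ ψ ∈ idealMul A I I a' b := by
  refine AddSubgroup.closure_induction (p := fun ψ _ => g ≫ ψ ∈ idealMul A I I a' b)
    ?_ ?_ ?_ ?_ hψ
  · rintro u ⟨c, ψ', φ, hψ', hφ, rfl⟩
    rw [← Category.assoc]
    exact AddSubgroup.subset_closure ⟨c, g ≫ ψ', φ, I.comp_mem_right g ψ' hψ', hφ, rfl⟩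
  · simp
  · intro x y _ _ hx hy
    simpa using add_mem hx hy
  · intro x _ hx
    simpa using neg_mem hx

def precomp (b : A) {a a' : A} (g : a' ⟶ a) : I.carrier a b →+ I.carrier a' b where
  toFun ψ := ⟨g ≫ ψ, I.comp_mem_right g (ψ : a ⟶ b) ψ.2⟩
  map_zero' := by ext; simp
  map_add' ψ χ := by ext; simp

@[simp]
lemma coe_precomp (b : A) {a a' : A} (g : a' ⟶ a) (ψ : I.carrier a b) :
    (I.precomp b g ψ : a' ⟶ b) = g ≫ ψ :=
  rfl

def quotSq (b : A) : PMod A where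
  obj a := AddCommGrpCat.of
    (I.carrier (unop a) b ⧸ (idealMul A I I (unop a) b).addSubgroupOf (I.carrier (unop a) b))
  map f := AddCommGrpCat.ofHom (QuotientAddGroup.map _ _ (I.precomp b f.unop) fun ψ hψ => by
    rw [AddSubgroup.mem_addSubgroupOf] at hψ
    rw [AddSubgroup.mem_comap, AddSubgroup.mem_addSubgroupOf]
    exact I.comp_mem_idealMul f.unop hψ)
  map_id a := by
    ext x
    simp [precomp]
  map_comp f g := by
    ext x
    simp [precomp]

lemma quotSq_map_mk (b : A) {a a' : Aᵒᵖ} (f : a ⟶ a') (ψ : I.carrier (unop a) b) :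
    (I.quotSq b).map f (QuotientAddGroup.mk ψ) = QuotientAddGroup.mk (I.precomp b f.unop ψ) :=
  rfl

instance quotSq_additive (b : A) : (I.quotSq b).Additive where
  map_add {_ _ f g} := by
    refine AddCommGrpCat.ext fun x => ?_
    obtain ⟨ψ, rfl⟩ := QuotientAddGroup.mk_surjective x
    change (QuotientAddGroup.mk (I.precomp b (f + g).unop ψ) : (I.quotSq b).obj _) =
      QuotientAddGroup.mk (I.precomp b f.unop ψ) + QuotientAddGroup.mk (I.precomp b g.unop ψ)
    rw [← QuotientAddGroup.mk_add]
    congr 1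
    ext
    simp

lemma quotSq_map_eq_zero (b : A) {a a' : A} {g : a' ⟶ a} (hg : g ∈ I.carrier a' a) :
    (I.quotSq b).map g.op = 0 := by
  refine AddCommGrpCat.ext fun x => ?_
  obtain ⟨ψ, rfl⟩ := QuotientAddGroup.mk_surjective x
  change (QuotientAddGroup.mk (I.precomp b g ψ) : (I.quotSq b).obj _) = 0
  rw [QuotientAddGroup.eq_zero_iff, AddSubgroup.mem_addSubgroupOf]
  exact AddSubgroup.subset_closure ⟨a, g, ψ, hg, ψ.2, rfl⟩

def toQuotSq {M : PMod A} {b : A} (j : M ⟶ Hrep A b)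
    (hj : ∀ a (y : M.obj a), j.app a y ∈ I.carrier (unop a) b) : M ⟶ I.quotSq b where
  app a := AddCommGrpCat.ofHom ((QuotientAddGroup.mk' _).comp
    ((j.app a).hom.codRestrict _ (hj a)))
  naturality a a' f := by
    ext y
    change QuotientAddGroup.mk _ = (I.quotSq b).map f (QuotientAddGroup.mk _)
    rw [quotSq_map_mk]
    congr 1
    ext
    exact ConcreteCategory.congr_hom (j.naturality f) y

end CatIdeal

lemma annihilatorIdeal_isIdempotent {C T F : Set (PMod A)} (hCT : IsTorsionPair A C T)
    (hTF : IsTorsionPair A T F) (hT : ∀ M ∈ T, M.Additive)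
    (hc : ∀ b : A, ∃ t, IsTorsionRadicalSub A C (Hrep A b) t) :
    (annihilatorIdeal T hT).IsIdempotent := by
  set I := annihilatorIdeal T hT
  intro a b
  refine le_antisymm (I.idealMul_le a b) fun r hr => ?_
  obtain ⟨t, ht⟩ := hc b
  have hQ : I.quotSq b ∈ T :=
    mem_of_annihilated hCT hTF fun _ _ _ hs => I.quotSq_map_eq_zero b hs
  let π := I.toQuotSq t.arrow fun _ y => map_eq_zero_of_inSub_radical hCT ht ⟨y, rfl⟩
  have hπ : π = 0 := hCT.hom_eq_zero ht.1 hQ π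
  obtain ⟨y, hy⟩ := (inSub_radical_iff hCT ht r).2 hr
  have hr0 : (QuotientAddGroup.mk ⟨r, hr⟩ : (I.quotSq b).obj (op a)) = 0 := by
    have h1 : π.app (op a) y = QuotientAddGroup.mk ⟨r, hr⟩ := by
      change QuotientAddGroup.mk _ = _
      congr 1
      exact Subtype.ext hy
    rw [← h1, hπ]
    rfl
  rwa [QuotientAddGroup.eq_zero_iff, AddSubgroup.mem_addSubgroupOf] at hr0

end

theorem statement9 (C T F : Set (PMod A)) (httf : IsTTFTriple A C T F)
    (c : (M : PMod A) → Subobject M)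
    (hc : ∀ M : PMod A, M.Additive → IsTorsionRadicalSub A C M (c M)) :
    -- (1) the ideal `c(A)`, with `c(A)(a,b) := c(H_b)(a)`, coincides with `I_T`
    (∀ (a b : A) (r : a ⟶ b),
      inSub A (c (Hrep A b)) (toH A r) ↔ ∀ M ∈ T, M.map r.op = 0) ∧
    -- (2) the ideal `I_T` is idempotent
    (∃ I : CatIdeal A,
      (∀ a b : A, (I.carrier a b : Set (a ⟶ b)) = {r : a ⟶ b | ∀ M ∈ T, M.map r.op = 0}) ∧
      I.IsIdempotent) := by
  obtain ⟨hCT, hTF⟩ := httf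
  have hT : ∀ M ∈ T, M.Additive := fun _ hM => hCT.additive_of_mem_right hM
  refine ⟨fun a b r => inSub_radical_iff hCT (hc _ inferInstance) r,
    annihilatorIdeal T hT, fun _ _ => rfl, ?_⟩
  exact annihilatorIdeal_isIdempotent hCT hTF hT fun b => ⟨_, hc (Hrep A b) inferInstance⟩
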